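/- arXiv:2510.23986 — 2 statements merged into one kernel-verified Lean document; each statement's English description precedes it below -/
import Mathlib

section
/- Let A be an n×n complex matrix, let U be a unitary n×n complex matrix and R an upper triangular n×n complex matrix such that A·U = U·R (a Schur factorization of A), and let v₁ denote the first column of U, so that v₁ is a unit eigenvector of A with eigenvalue λ₁ = R₁₁. Then for every complex scalar σ, the characteristic polynomial of A₁ := A − σ·v₁·v₁* equals (X − (R₁₁ − σ)) · ∏_{i=2}^{n} (X − Rᵢᵢ); in particular, the eigenvalues of A₁ (with multiplicity) are λ₁ − σ together with the eigenvalues R₂₂, …, Rₙₙ of A other than λ₁. -/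
/-! Since `v₁ v₁* = U E₁₁ U*`, conjugating `A₁` by `U` gives `R - σ E₁₁`, which is still upper
triangular, with diagonal that of `R` except for `R₁₁ - σ`. The characteristic polynomial is a
similarity invariant, and that of a triangular matrix is the product over its diagonal. -/

open Polynomial

namespace Matrix

variable {ι : Type*} [Fintype ι] [DecidableEq ι]

lemma vecMulVec_col_star_col {m α : Type*} [NonAssocSemiring α] [StarRing α]
    (U : Matrix m ι α) (j : ι) :
    vecMulVec (fun i => U i j) (star fun i => U i j) = U * single j j (1 : α) * Uᴴ := by
  ext i k
  rw [mul_apply, Finset.sum_eq_single j (fun l _ hl => by simp [hl]) (by simp)]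
  simp [vecMulVec_apply]

lemma charpoly_mul_mul_of_mul_eq_one {R : Type*} [CommRing R] {U V : Matrix ι ι R}
    (h : V * U = 1) (M : Matrix ι ι R) : (U * M * V).charpoly = M.charpoly := by
  rw [charpoly_mul_comm, ← mul_assoc, h, one_mul]

lemma IsUpperTriangular.charpoly_sub_smul_single [LinearOrder ι] {R : Type*} [CommRing R]
    {M : Matrix ι ι R} (hM : M.IsUpperTriangular) (i : ι) (σ : R) :
    (M - σ • single i i 1).charpoly =
      (X - C (M i i - σ)) * ∏ j ∈ Finset.univ.erase i, (X - C (M j j)) := by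
  have hσ : (M - σ • single i i 1).IsUpperTriangular :=
    hM.sub (by simpa using blockTriangular_single (b := id) le_rfl σ)
  rw [charpoly_of_isUpperTriangular _ hσ, ← Finset.mul_prod_erase _ _ (Finset.mem_univ i)]
  congr 1
  · simp
  · refine Finset.prod_congr rfl fun j hj => ?_
    simp [single_apply_of_ne _ _ _ _ _ (fun h => (Finset.ne_of_mem_erase hj) h.1.symm)]

end Matrix

open Matrix

theorem stmt_1_general {n : ℕ} (hn : 0 < n) (A U R : Matrix (Fin n) (Fin n) ℂ)
    (hU₂ : U * U.conjTranspose = 1)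
    (hR : ∀ i j : Fin n, j < i → R i j = 0)
    (hAUR : A * U = U * R) (σ : ℂ) :
    (A - σ • Matrix.vecMulVec (fun i => U i ⟨0, hn⟩)
        (star fun i => U i ⟨0, hn⟩)).charpoly =
      (X - C (R ⟨0, hn⟩ ⟨0, hn⟩ - σ)) *
        ∏ i ∈ Finset.univ.erase (⟨0, hn⟩ : Fin n), (X - C (R i i)) := by
  set i₀ : Fin n := ⟨0, hn⟩
  have hA : A = U * R * Uᴴ := by
    rw [← hAUR, mul_assoc, hU₂, mul_one]
  have hA₁ : A - σ • vecMulVec (fun i => U i i₀) (star fun i => U i i₀) =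
      U * (R - σ • single i₀ i₀ 1) * Uᴴ := by
    rw [vecMulVec_col_star_col, hA, Matrix.mul_sub, Matrix.sub_mul, Matrix.mul_smul,
      Matrix.smul_mul]
  rw [hA₁, charpoly_mul_mul_of_mul_eq_one (mul_eq_one_comm.mp hU₂),
    IsUpperTriangular.charpoly_sub_smul_single (fun i j h => hR i j h)]

/-- **Deflation with one Schur vector (spectral statement).**
If `A * U = U * R` is a Schur factorization of the `n × n` complex matrix `A`
(`U` unitary, `R` upper triangular), and `v₁` is the first column of `U`
(a unit eigenvector of `A` with eigenvalue `R₁₁`), then for every `σ : ℂ` the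
characteristic polynomial of `A₁ = A - σ • v₁ v₁*` is
`(X - (R₁₁ - σ)) * ∏_{i ≠ 1} (X - Rᵢᵢ)`; i.e. the eigenvalues of `A₁` are
`R₁₁ - σ` together with the remaining diagonal entries of `R`. -/
theorem stmt_1 {n : ℕ} (hn : 0 < n) (A U R : Matrix (Fin n) (Fin n) ℂ)
    (hU₁ : U.conjTranspose * U = 1) (hU₂ : U * U.conjTranspose = 1)
    (hR : ∀ i j : Fin n, j < i → R i j = 0)
    (hAUR : A * U = U * R) (σ : ℂ) :
    (A - σ • Matrix.vecMulVec (fun i => U i ⟨0, hn⟩)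
        (star fun i => U i ⟨0, hn⟩)).charpoly =
      (X - C (R ⟨0, hn⟩ ⟨0, hn⟩ - σ)) *
        ∏ i ∈ Finset.univ.erase (⟨0, hn⟩ : Fin n), (X - C (R i i)) :=
  stmt_1_general hn A U R hU₂ hR hAUR σ
end

section
/- Let A be an n×n complex matrix (n ≥ 2) which is diagonalizable with eigenbasis of unit eigenvectors v₁, …, vₙ, with A·vᵢ = λᵢ·vᵢ, and assume the dominance condition |λ₁| > |λ_j| for all j ≥ 2; set r := (max_{j≥2} |λ_j|)/|λ₁| < 1. Let x⁽⁰⁾ = ∑_{i=1}^{n} aᵢ·vᵢ with a₁ ≠ 0, and define the normalized power-method iterate x⁽ᵏ⁾ := Aᵏ·x⁽⁰⁾ / ‖Aᵏ·x⁽⁰⁾‖ and the Rayleigh quotient λ⁽ᵏ⁾ := ⟨x⁽ᵏ⁾, A·x⁽ᵏ⁾⟩ / ⟨x⁽ᵏ⁾, x⁽ᵏ⁾⟩. Then there exists a constant C ≥ 0 such that |λ₁ − λ⁽ᵏ⁾| ≤ C·rᵏ for all k. -/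
/-!
Put `y k = Aᵏ x0 = ∑ aᵢ λᵢᵏ vᵢ`. The Rayleigh quotient is invariant under scaling, so
`λ⁽ᵏ⁾` is the Rayleigh quotient of `y k`, and `λ₁ - R(y) = ⟨y, λ₁ y - A y⟩ / ⟨y, y⟩` gives
`|λ₁ - R(y)| ≤ ‖λ₁ y - A y‖ / ‖y‖`. The residual `λ₁ y k - A y k` has no `v₁`-component, so
its norm is `O(ρᵏ)` with `ρ = max_{j ≥ 2} |λⱼ|`. On the other hand, a linear combination of
linearly independent vectors has norm at least a fixed multiple of each coefficient, so
`‖y k‖ ≥ c |a₁| |λ₁|ᵏ`. Dividing gives `O((ρ / |λ₁|)ᵏ) = O(rᵏ)`.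
-/

open scoped InnerProductSpace

theorem Module.End.pow_apply_sum_smul_of_eigen {R M ι : Type*} [CommSemiring R]
    [AddCommMonoid M] [Module R M] (T : Module.End R M) {v : ι → M} {lam : ι → R}
    (heig : ∀ i, T (v i) = lam i • v i) (a : ι → R) (s : Finset ι) (k : ℕ) :
    (T ^ k) (∑ i ∈ s, a i • v i) = ∑ i ∈ s, (a i * lam i ^ k) • v i := by
  induction k with
  | zero => simp
  | succ k ih =>
    rw [pow_succ', Module.End.mul_apply, ih, map_sum]
    refine Finset.sum_congr rfl fun i _ => ?_
    rw [map_smul, heig, smul_smul, pow_succ, mul_assoc]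

theorem LinearIndependent.exists_pos_mul_norm_le {𝕜 E ι : Type*} [NontriviallyNormedField 𝕜]
    [CompleteSpace 𝕜] [NormedAddCommGroup E] [NormedSpace 𝕜 E] [Fintype ι] {v : ι → E}
    (hv : LinearIndependent 𝕜 v) :
    ∃ c > 0, ∀ (a : ι → 𝕜) (i : ι), c * ‖a i‖ ≤ ‖∑ j, a j • v j‖ := by
  obtain ⟨K, -, hK⟩ := (Fintype.linearCombination 𝕜 v).injective_iff_antilipschitz.mp
    (linearIndependent_iff_injective_fintypeLinearCombination.mp hv)
  obtain ⟨c, hc, hbound⟩ := antilipschitzWith_iff_exists_mul_le_norm.mp ⟨K, hK⟩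
  refine ⟨c, hc, fun a i => ?_⟩
  calc c * ‖a i‖ ≤ c * ‖a‖ := by gcongr; exact norm_le_pi_norm a i
    _ ≤ ‖∑ j, a j • v j‖ := by simpa [Fintype.linearCombination_apply] using hbound a

theorem norm_sum_smul_pow_le {𝕜 E ι : Type*} [NormedField 𝕜] [SeminormedAddCommGroup E]
    [NormedSpace 𝕜 E] (s : Finset ι) (c lam : ι → 𝕜) (w : ι → E) {ρ : ℝ}
    (hρ : ∀ i ∈ s, ‖lam i‖ ≤ ρ) (k : ℕ) :
    ‖∑ i ∈ s, (c i * lam i ^ k) • w i‖ ≤ (∑ i ∈ s, ‖c i‖ * ‖w i‖) * ρ ^ k := by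
  rw [Finset.sum_mul]
  refine (norm_sum_le _ _).trans (Finset.sum_le_sum fun i hi => ?_)
  rw [norm_smul, norm_mul, norm_pow]
  have : ‖lam i‖ ^ k ≤ ρ ^ k := pow_le_pow_left₀ (norm_nonneg _) (hρ i hi) k
  calc ‖c i‖ * ‖lam i‖ ^ k * ‖w i‖ = ‖c i‖ * ‖w i‖ * ‖lam i‖ ^ k := by ring
    _ ≤ ‖c i‖ * ‖w i‖ * ρ ^ k := by gcongr

namespace LinearMap

variable {𝕜 E : Type*} [RCLike 𝕜] [NormedAddCommGroup E] [InnerProductSpace 𝕜 E]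

/-- `𝕜`-valued, unlike Mathlib's `ContinuousLinearMap.rayleighQuotient`, which is
`re ⟪T x, x⟫ / ‖x‖ ^ 2`. -/
noncomputable def rayleighQuotient (T : E →ₗ[𝕜] E) (x : E) : 𝕜 :=
  ⟪x, T x⟫_𝕜 / ⟪x, x⟫_𝕜

theorem rayleighQuotient_smul (T : E →ₗ[𝕜] E) {c : 𝕜} (hc : c ≠ 0) (x : E) :
    T.rayleighQuotient (c • x) = T.rayleighQuotient x := by
  simp only [rayleighQuotient, map_smul, inner_smul_left, inner_smul_right]
  rw [← mul_assoc, ← mul_assoc, mul_div_mul_left _ _ (by simpa using hc)]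

theorem rayleighQuotient_inv_norm_smul (T : E →ₗ[𝕜] E) (x : E) :
    T.rayleighQuotient (((‖x‖⁻¹ : ℝ) : 𝕜) • x) = T.rayleighQuotient x := by
  rcases eq_or_ne x 0 with rfl | hx
  · rw [smul_zero]
  · exact T.rayleighQuotient_smul (by simpa using hx) x

theorem norm_sub_rayleighQuotient_le (T : E →ₗ[𝕜] E) (μ : 𝕜) {x : E} (hx : x ≠ 0) :
    ‖μ - T.rayleighQuotient x‖ ≤ ‖μ • x - T x‖ / ‖x‖ := by
  have hxx : ⟪x, x⟫_𝕜 ≠ 0 := inner_self_ne_zero.mpr hx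
  have hdiff : μ - T.rayleighQuotient x = ⟪x, μ • x - T x⟫_𝕜 / ⟪x, x⟫_𝕜 := by
    rw [rayleighQuotient, eq_div_iff hxx, sub_mul, div_mul_cancel₀ _ hxx, inner_sub_right,
      inner_smul_right]
  calc ‖μ - T.rayleighQuotient x‖ = ‖⟪x, μ • x - T x⟫_𝕜‖ / ‖x‖ ^ 2 := by
        rw [hdiff, norm_div, inner_self_eq_norm_sq_to_K, norm_pow, RCLike.norm_ofReal,
          abs_norm]
    _ ≤ ‖x‖ * ‖μ • x - T x‖ / ‖x‖ ^ 2 := by gcongr; exact norm_inner_le_norm _ _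
    _ = ‖μ • x - T x‖ / ‖x‖ := by field_simp

theorem norm_sub_rayleighQuotient_pow_apply_le {ι : Type*} [Fintype ι] [DecidableEq ι]
    (T : E →ₗ[𝕜] E) {v : ι → E} (hv : LinearIndependent 𝕜 v) {lam : ι → 𝕜}
    (heig : ∀ i, T (v i) = lam i • v i) {z : ι} (hz : lam z ≠ 0) {ρ : ℝ}
    (hρ : ∀ i ≠ z, ‖lam i‖ ≤ ρ) {a : ι → 𝕜} (ha : a z ≠ 0) :
    ∃ C, 0 ≤ C ∧ ∀ k : ℕ,
      ‖lam z - T.rayleighQuotient ((T ^ k) (∑ i, a i • v i))‖ ≤ C * (ρ / ‖lam z‖) ^ k := by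
  obtain ⟨c, hc, hcoeff⟩ := hv.exists_pos_mul_norm_le
  set s := Finset.univ.erase z
  set B := ∑ i ∈ s, ‖a i * (lam z - lam i)‖ * ‖v i‖
  refine ⟨B / (c * ‖a z‖), by positivity, fun k => ?_⟩
  set y := (T ^ k) (∑ i, a i • v i)
  have hy : y = ∑ i, (a i * lam i ^ k) • v i :=
    Module.End.pow_apply_sum_smul_of_eigen T heig a _ k
  have hy_lower : c * ‖a z‖ * ‖lam z‖ ^ k ≤ ‖y‖ := by
    simpa [hy, mul_assoc] using hcoeff (fun i => a i * lam i ^ k) z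
  have hy_pos : 0 < ‖y‖ := hy_lower.trans_lt' (by positivity)
  have hres : lam z • y - T y = ∑ i ∈ s, (a i * (lam z - lam i) * lam i ^ k) • v i := by
    rw [Finset.sum_erase _ (by simp), hy, Finset.smul_sum, map_sum, ← Finset.sum_sub_distrib]
    refine Finset.sum_congr rfl fun i _ => ?_
    rw [map_smul, heig, smul_smul, smul_smul, ← sub_smul]
    ring_nf
  have hres_le : ‖lam z • y - T y‖ ≤ B * ρ ^ k := by
    rw [hres]
    exact norm_sum_smul_pow_le s _ lam v (fun i hi => hρ i (Finset.ne_of_mem_erase hi)) k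
  calc ‖lam z - T.rayleighQuotient y‖ ≤ ‖lam z • y - T y‖ / ‖y‖ :=
        T.norm_sub_rayleighQuotient_le _ (norm_pos_iff.mp hy_pos)
    _ ≤ B * ρ ^ k / (c * ‖a z‖ * ‖lam z‖ ^ k) := by
        gcongr
        · exact (norm_nonneg _).trans hres_le
    _ = B / (c * ‖a z‖) * (ρ / ‖lam z‖) ^ k := by
        rw [div_pow]; field_simp

end LinearMap

/-- **Convergence of the Rayleigh quotients in the power method.**
Let `A` be an `n × n` complex matrix (`n ≥ 2`), diagonalizable with an
eigenbasis of unit eigenvectors `v i` (eigenvalues `lam i`), with dominant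
eigenvalue `lam z` (`z` the first index): `|lam i| < |lam z|` for `i ≠ z`.
Set `r = (max_{i ≠ z} |lam i|) / |lam z|`. If `x0 = ∑ i, a i • v i` with
`a z ≠ 0`, `x⁽ᵏ⁾ = Aᵏ x0 / ‖Aᵏ x0‖` and
`λ⁽ᵏ⁾ = ⟨x⁽ᵏ⁾, A x⁽ᵏ⁾⟩ / ⟨x⁽ᵏ⁾, x⁽ᵏ⁾⟩` is the Rayleigh quotient, then there is
a constant `C ≥ 0` with `|lam z - λ⁽ᵏ⁾| ≤ C * rᵏ` for all `k`. -/
theorem stmt_7 {n : ℕ} (hn : 2 ≤ n) (A : Matrix (Fin n) (Fin n) ℂ)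
    (v : Fin n → EuclideanSpace ℂ (Fin n))
    (hli : LinearIndependent ℂ v)
    (lam : Fin n → ℂ)
    (heig : ∀ i, Matrix.toEuclideanLin A (v i) = lam i • v i)
    (z : Fin n)
    (hdom : ∀ i, i ≠ z → ‖lam i‖ < ‖lam z‖)
    (r : ℝ)
    (hr : r = ((Finset.univ.erase z).sup'
        (Finset.card_pos.mp (by
          rw [Finset.card_erase_of_mem (Finset.mem_univ z), Finset.card_univ,
            Fintype.card_fin]
          omega))
        fun i => ‖lam i‖) / ‖lam z‖)
    (a : Fin n → ℂ) (ha : a z ≠ 0)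
    (x0 : EuclideanSpace ℂ (Fin n)) (hx0 : x0 = ∑ i, a i • v i)
    (xk : ℕ → EuclideanSpace ℂ (Fin n))
    (hxk : ∀ k, xk k = ‖Matrix.toEuclideanLin (A ^ k) x0‖⁻¹ •
      Matrix.toEuclideanLin (A ^ k) x0) :
    ∃ C : ℝ, 0 ≤ C ∧ ∀ k : ℕ,
      ‖lam z -
        (inner ℂ (xk k) (Matrix.toEuclideanLin A (xk k)) : ℂ) /
          (inner ℂ (xk k) (xk k) : ℂ)‖ ≤ C * r ^ k := by
  obtain ⟨w, hw⟩ := Fintype.exists_ne_of_one_lt_card (by simpa using hn.trans_lt' one_lt_two) z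
  have hz : lam z ≠ 0 := norm_pos_iff.mp ((norm_nonneg _).trans_lt (hdom w hw))
  have hρ : ∀ i ≠ z, ‖lam i‖ ≤ (Finset.univ.erase z).sup' ⟨w, by simpa using hw⟩ (‖lam ·‖) :=
    fun i hi => Finset.le_sup' (‖lam ·‖) (by simpa using hi)
  obtain ⟨C, hC, hbound⟩ :=
    (Matrix.toEuclideanLin A).norm_sub_rayleighQuotient_pow_apply_le hli heig hz hρ ha
  refine ⟨C, hC, fun k => ?_⟩
  change ‖lam z - (Matrix.toEuclideanLin A).rayleighQuotient (xk k)‖ ≤ C * r ^ k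
  rw [hxk, Matrix.toLpLin_pow, RCLike.real_smul_eq_coe_smul (K := ℂ),
    LinearMap.rayleighQuotient_inv_norm_smul, hr, hx0]
  exact hbound k
end
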